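/- Fix B ≥ 0 and k ∈ ℝ with α̂(k) + B²/4 > 0. Let q₁, q₂, p₁, p₂ : ℝ → ℂ be differentiable functions satisfying, for all t, q₁′(t) = p₁(t), q₂′(t) = p₂(t), p₁′(t) = −α̂(k)·q₁(t) + B·p₂(t) and p₂′(t) = −α̂(k)·q₂(t) − B·p₁(t). Define ψ₁(t) = θ_{1,B}(k)·[p₁(t) − i·ω_{2,B}(k)·q₁(t) + i·p₂(t) + ω_{2,B}(k)·q₂(t)] and ψ₂(t) = θ_{2,B}(k)·[p₁(t) − i·ω_{1,B}(k)·q₁(t) − i·p₂(t) − ω_{1,B}(k)·q₂(t)]. Then for j ∈ {1,2} and all t ∈ ℝ, ψ_j′(t) = −i·ω_{j,B}(k)·ψ_j(t). -/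
import Mathlib


/-- `α̂(k) = 4 sin²(πk)`. -/
noncomputable def alphaHat (k : ℝ) : ℝ := 4 * Real.sin (Real.pi * k) ^ 2

/-- `ω_{i,B}(k) = √(α̂(k) + B²/4) ± B/2` (plus sign for `i = 1`, minus for `i = 2`). -/
noncomputable def omegaF (B : ℝ) (i : ℕ) (k : ℝ) : ℝ :=
  Real.sqrt (alphaHat k + B ^ 2 / 4) + (if i = 1 then B / 2 else -(B / 2))

/-- `θ_{i,B}(k) = √(ω_{i,B}(k)/(ω_{1,B}(k) + ω_{2,B}(k)))`. -/
noncomputable def thetaF (B : ℝ) (i : ℕ) (k : ℝ) : ℝ :=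
  Real.sqrt (omegaF B i k / (omegaF B 1 k + omegaF B 2 k))

/-- With `q₁, q₂, p₁, p₂ : ℝ → ℂ` differentiable and satisfying
`q₁′ = p₁`, `q₂′ = p₂`, `p₁′ = -α̂(k) q₁ + B p₂`, `p₂′ = -α̂(k) q₂ - B p₁`, the
combinations `ψ₁, ψ₂` are eigenmodes: `ψ_j′(t) = -i ω_{j,B}(k) ψ_j(t)`. -/
theorem stmt_14 (B k : ℝ) (hB : 0 ≤ B) (hk : 0 < alphaHat k + B ^ 2 / 4)
    (q₁ q₂ p₁ p₂ : ℝ → ℂ)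
    (hq₁d : Differentiable ℝ q₁) (hq₂d : Differentiable ℝ q₂)
    (hp₁d : Differentiable ℝ p₁) (hp₂d : Differentiable ℝ p₂)
    (hq₁ : ∀ t : ℝ, deriv q₁ t = p₁ t)
    (hq₂ : ∀ t : ℝ, deriv q₂ t = p₂ t)
    (hp₁ : ∀ t : ℝ, deriv p₁ t = -(alphaHat k : ℂ) * q₁ t + (B : ℂ) * p₂ t)
    (hp₂ : ∀ t : ℝ, deriv p₂ t = -(alphaHat k : ℂ) * q₂ t - (B : ℂ) * p₁ t)
    (ψ₁ ψ₂ : ℝ → ℂ)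
    (hψ₁ : ∀ t : ℝ, ψ₁ t = (thetaF B 1 k : ℂ) *
      (p₁ t - Complex.I * (omegaF B 2 k : ℂ) * q₁ t + Complex.I * p₂ t +
        (omegaF B 2 k : ℂ) * q₂ t))
    (hψ₂ : ∀ t : ℝ, ψ₂ t = (thetaF B 2 k : ℂ) *
      (p₁ t - Complex.I * (omegaF B 1 k : ℂ) * q₁ t - Complex.I * p₂ t -
        (omegaF B 1 k : ℂ) * q₂ t)) :
    (∀ t : ℝ, deriv ψ₁ t = -Complex.I * (omegaF B 1 k : ℂ) * ψ₁ t) ∧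
    (∀ t : ℝ, deriv ψ₂ t = -Complex.I * (omegaF B 2 k : ℂ) * ψ₂ t) := by
  have hsumR : omegaF B 1 k = omegaF B 2 k + B := by
    simp [omegaF]; ring
  have hprodR : omegaF B 1 k * omegaF B 2 k = alphaHat k := by
    have h : Real.sqrt (alphaHat k + B ^ 2 / 4) ^ 2 = alphaHat k + B ^ 2 / 4 :=
      Real.sq_sqrt hk.le
    norm_num [omegaF]
    nlinarith [h]
  have hsum : (omegaF B 1 k : ℂ) = (omegaF B 2 k : ℂ) + (B : ℂ) := by
    exact_mod_cast congrArg (Complex.ofReal) hsumR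
  have hprod : (omegaF B 1 k : ℂ) * (omegaF B 2 k : ℂ) = (alphaHat k : ℂ) := by
    exact_mod_cast congrArg (Complex.ofReal) hprodR
  have hI : Complex.I * Complex.I = -1 := Complex.I_mul_I
  constructor
  · intro t
    have hfun : ψ₁ = fun t => (thetaF B 1 k : ℂ) *
        (p₁ t - Complex.I * (omegaF B 2 k : ℂ) * q₁ t + Complex.I * p₂ t +
          (omegaF B 2 k : ℂ) * q₂ t) := funext hψ₁
    have H : HasDerivAt (fun t => (thetaF B 1 k : ℂ) *
        (p₁ t - Complex.I * (omegaF B 2 k : ℂ) * q₁ t + Complex.I * p₂ t +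
          (omegaF B 2 k : ℂ) * q₂ t))
        ((thetaF B 1 k : ℂ) *
          (deriv p₁ t - Complex.I * (omegaF B 2 k : ℂ) * deriv q₁ t
            + Complex.I * deriv p₂ t + (omegaF B 2 k : ℂ) * deriv q₂ t)) t := by
      exact ((((hp₁d t).hasDerivAt.sub
        (((hq₁d t).hasDerivAt.const_mul (Complex.I * (omegaF B 2 k : ℂ))))).add
        ((hp₂d t).hasDerivAt.const_mul Complex.I)).add
        ((hq₂d t).hasDerivAt.const_mul ((omegaF B 2 k : ℂ)))).const_mul _
    rw [hfun]
    rw [H.deriv, hp₁ t, hq₁ t, hp₂ t, hq₂ t]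
    beta_reduce
    linear_combination ((thetaF B 1 k : ℂ) * (q₁ t + Complex.I * q₂ t)) * hprod +
      ((thetaF B 1 k : ℂ) * (Complex.I * p₁ t - p₂ t)) * hsum +
      ((thetaF B 1 k : ℂ) * ((omegaF B 1 k : ℂ) * p₂ t -
        (omegaF B 1 k : ℂ) * (omegaF B 2 k : ℂ) * q₁ t)) * hI
  · intro t
    have hfun : ψ₂ = fun t => (thetaF B 2 k : ℂ) *
        (p₁ t - Complex.I * (omegaF B 1 k : ℂ) * q₁ t - Complex.I * p₂ t -
          (omegaF B 1 k : ℂ) * q₂ t) := funext hψ₂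
    have H : HasDerivAt (fun t => (thetaF B 2 k : ℂ) *
        (p₁ t - Complex.I * (omegaF B 1 k : ℂ) * q₁ t - Complex.I * p₂ t -
          (omegaF B 1 k : ℂ) * q₂ t))
        ((thetaF B 2 k : ℂ) *
          (deriv p₁ t - Complex.I * (omegaF B 1 k : ℂ) * deriv q₁ t
            - Complex.I * deriv p₂ t - (omegaF B 1 k : ℂ) * deriv q₂ t)) t := by
      exact ((((hp₁d t).hasDerivAt.sub
        (((hq₁d t).hasDerivAt.const_mul (Complex.I * (omegaF B 1 k : ℂ))))).sub
        ((hp₂d t).hasDerivAt.const_mul Complex.I)).sub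
        ((hq₂d t).hasDerivAt.const_mul ((omegaF B 1 k : ℂ)))).const_mul _
    rw [hfun]
    rw [H.deriv, hp₁ t, hq₁ t, hp₂ t, hq₂ t]
    beta_reduce
    linear_combination ((thetaF B 2 k : ℂ) * (q₁ t - Complex.I * q₂ t)) * hprod +
      (-(thetaF B 2 k : ℂ) * (Complex.I * p₁ t + p₂ t)) * hsum +
      ((thetaF B 2 k : ℂ) * (-(omegaF B 2 k : ℂ) * p₂ t -
        (omegaF B 1 k : ℂ) * (omegaF B 2 k : ℂ) * q₁ t)) * hI
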